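/- arXiv:2311.13347 — 11 statements merged into one kernel-verified Lean document; each statement's English description precedes it below -/
import Mathlib

section
/- Let p ≥ 1, a ∈ (0,2), and π a probability distribution on {0,1}^p. Define the prior risk R(γ̂) = E_π[Σ_{i=1}^p (a·1(γ_i=0)·1(γ̂_i=1) + (2−a)·1(γ_i=1)·1(γ̂_i=0))]. Then R is a constant function on {0,1}^p if and only if π(γ_i = 1) = a/2 for every i = 1, …, p. -/
open Finset

/-!
The loss is a sum over coordinates and the prior risk is linear in `π`, so the risk of `γ̂` is
`∑ i, r_i (γ̂ i)`, where `r_i` only depends on the inclusion probability `q_i = π(γ_i = 1)`: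
`r_i true = a (1 - q_i)` and `r_i false = (2 - a) q_i`. A separable sum is constant exactly when
each summand is, and `a (1 - q) = (2 - a) q` says `q = a / 2`.
-/

theorem Fintype.sum_apply_const_iff {ι β M : Type*} [Fintype ι] [DecidableEq ι]
    [AddCancelCommMonoid M] (f : ι → β → M) :
    (∀ g g' : ι → β, ∑ i, f i (g i) = ∑ i, f i (g' i)) ↔ ∀ i b b', f i b = f i b' := by
  refine ⟨fun h i b b' => ?_, fun h g g' => Fintype.sum_congr _ _ fun i => h i _ _⟩
  have hupdate : ∀ c, ∑ j, f j (Function.update (fun _ => b) i c j)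
      = f i c + ∑ j ∈ univ.erase i, f j b := fun c => by
    rw [← add_sum_erase _ _ (mem_univ i), Function.update_self]
    congr 1
    exact Finset.sum_congr rfl fun j hj => by rw [Function.update_of_ne (ne_of_mem_erase hj)]
  have := h (Function.update (fun _ => b) i b) (Function.update (fun _ => b) i b')
  rwa [hupdate, hupdate, add_left_inj] at this

theorem Fintype.sum_mul_bool_eq {α : Type*} [Fintype α] {π : α → ℝ} (hπ : ∑ x, π x = 1)
    (f : α → Bool) (h : Bool → ℝ) :
    ∑ x, π x * h (f x) =
      (1 - ∑ x, if f x = true then π x else 0) * h false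
        + (∑ x, if f x = true then π x else 0) * h true := by
  have hsplit : ∀ x, π x * h (f x) = (π x - if f x = true then π x else 0) * h false
      + (if f x = true then π x else 0) * h true := fun x => by
    cases f x <;> simp
  rw [Fintype.sum_congr _ _ hsplit, sum_add_distrib, ← sum_mul, ← sum_mul, sum_sub_distrib,
    hπ]

section HammingLoss

variable {p : ℕ}

def hammingLoss (a : ℝ) (γ γhat : Bool) : ℝ :=
  a * (if γ = false then 1 else 0) * (if γhat = true then 1 else 0)
    + (2 - a) * (if γ = true then 1 else 0) * (if γhat = false then 1 else 0)

def inclusionProb (π : (Fin p → Bool) → ℝ) (i : Fin p) : ℝ :=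
  ∑ γ : Fin p → Bool, if γ i = true then π γ else 0

def coordinateRisk (a q : ℝ) (γhat : Bool) : ℝ :=
  (1 - q) * hammingLoss a false γhat + q * hammingLoss a true γhat

theorem priorRisk_eq_sum_coordinateRisk {π : (Fin p → Bool) → ℝ} (hπ : ∑ γ, π γ = 1) (a : ℝ)
    (γhat : Fin p → Bool) :
    ∑ γ, π γ * ∑ i, hammingLoss a (γ i) (γhat i)
      = ∑ i, coordinateRisk a (inclusionProb π i) (γhat i) := by
  simp_rw [mul_sum]
  rw [sum_comm]
  exact sum_congr rfl fun i _ =>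
    Fintype.sum_mul_bool_eq hπ (fun γ => γ i) fun c => hammingLoss a c (γhat i)

@[simp]
theorem coordinateRisk_true (a q : ℝ) : coordinateRisk a q true = (1 - q) * a := by
  simp [coordinateRisk, hammingLoss]

@[simp]
theorem coordinateRisk_false (a q : ℝ) : coordinateRisk a q false = q * (2 - a) := by
  simp [coordinateRisk, hammingLoss]

theorem coordinateRisk_const_iff (a q : ℝ) :
    (∀ b b', coordinateRisk a q b = coordinateRisk a q b') ↔ q = a / 2 := by
  constructor
  · intro h
    have := h true false
    simp only [coordinateRisk_true, coordinateRisk_false] at this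
    linarith
  · rintro rfl b b'
    cases b <;> cases b' <;> simp only [coordinateRisk_true, coordinateRisk_false] <;> ring

end HammingLoss

theorem riskEquilibrium_iff_marginal_eq_half_a_general
    (p : ℕ)
    (π : (Fin p → Bool) → ℝ)
    (hπ1 : ∑ γ : Fin p → Bool, π γ = 1)
    (a : ℝ)
    (R : (Fin p → Bool) → ℝ)
    (hR : ∀ ghat, R ghat = ∑ γ : Fin p → Bool, π γ * ∑ i : Fin p,
      (a * (if γ i = false then 1 else 0) * (if ghat i = true then 1 else 0)
        + (2 - a) * (if γ i = true then 1 else 0) * (if ghat i = false then 1 else 0))) :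
    (∀ ghat ghat' : Fin p → Bool, R ghat = R ghat') ↔
      (∀ i : Fin p, (∑ γ : Fin p → Bool, (if γ i = true then π γ else 0)) = a / 2) := by
  have hR' : R = fun ghat => ∑ i, coordinateRisk a (inclusionProb π i) (ghat i) :=
    funext fun ghat => (hR ghat).trans (priorRisk_eq_sum_coordinateRisk hπ1 a ghat)
  subst hR'
  rw [Fintype.sum_apply_const_iff]
  exact forall_congr' fun i => coordinateRisk_const_iff a (inclusionProb π i)

/-- Risk equilibrium characterization for generalized Hamming loss: the prior risk is
constant on `{0,1}^p` iff every marginal inclusion probability equals `a/2`. -/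
theorem riskEquilibrium_iff_marginal_eq_half_a
    (p : ℕ) (hp : 1 ≤ p)
    (π : (Fin p → Bool) → ℝ)
    (hπ : ∀ γ, 0 ≤ π γ) (hπ1 : ∑ γ : Fin p → Bool, π γ = 1)
    (a : ℝ) (ha : 0 < a) (ha2 : a < 2)
    (R : (Fin p → Bool) → ℝ)
    (hR : ∀ ghat, R ghat = ∑ γ : Fin p → Bool, π γ * ∑ i : Fin p,
      (a * (if γ i = false then 1 else 0) * (if ghat i = true then 1 else 0)
        + (2 - a) * (if γ i = true then 1 else 0) * (if ghat i = false then 1 else 0))) :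
    (∀ ghat ghat' : Fin p → Bool, R ghat = R ghat') ↔
      (∀ i : Fin p, (∑ γ : Fin p → Bool, (if γ i = true then π γ else 0)) = a / 2) :=
  riskEquilibrium_iff_marginal_eq_half_a_general p π hπ1 a R hR
end

section
/- Let p ≥ 2 and let π be an exchangeable probability distribution on the set of partitions of {1,…,p} (invariant under permutations of the indices). Let a ∈ (0,2) and define generalized Binder's loss L(z, ẑ) = Σ_{i<j} [a·1(z_i=z_j)·1(ẑ_i≠ẑ_j) + (2−a)·1(z_i≠z_j)·1(ẑ_i=ẑ_j)]. Then the prior risk R(ẑ) = E_π[L(z, ẑ)] is constant over all partitions ẑ if and only if the prior co-clustering probability P_π(z_i = z_j) equals (2−a)/2 for all i ≠ j. -/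
/-!
By linearity of expectation the prior risk of `ẑ` is `∑_{i<j} a q_ij` plus the sum, over the
pairs `i < j` that `ẑ` co-clusters, of `2 - a - 2 q_ij`, where `q_ij` is the co-clustering
probability. The first part does not depend on `ẑ`, so the risk is constant iff every pair term
vanishes: comparing the all-singletons labelling with the one that merges only `i` and `j`
isolates the term of the pair `{i, j}`.
-/

open Finset

namespace BinderLoss

theorem update_id_apply_eq_iff {ι : Type*} [LinearOrder ι] {i j k l : ι} (hij : i < j)
    (hkl : k < l) :
    Function.update id j i k = Function.update id j i l ↔ k = i ∧ l = j := by
  simp only [Function.update_apply, id]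
  split_ifs <;> grind

section Coclustering

variable {ι κ : Type*} [Fintype ι] [DecidableEq ι] [Fintype κ] [DecidableEq κ]

def coclusterProb (π : (ι → κ) → ℝ) (i j : ι) : ℝ :=
  ∑ z : ι → κ, if z i = z j then π z else 0

lemma coclusterProb_comm (π : (ι → κ) → ℝ) (i j : ι) :
    coclusterProb π i j = coclusterProb π j i := by
  simp only [coclusterProb, eq_comm]

lemma sum_ite_ne_eq_one_sub_coclusterProb {π : (ι → κ) → ℝ} (hπ1 : ∑ z, π z = 1) (i j : ι) :
    ∑ z : ι → κ, (if z i ≠ z j then π z else 0) = 1 - coclusterProb π i j := by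
  rw [← hπ1, coclusterProb, ← sum_sub_distrib]
  refine sum_congr rfl fun z _ => ?_
  split_ifs <;> simp_all

/-- The prior expectation of the loss on the pair `(i, j)`, where `b` says whether the
estimate puts `i` and `j` in the same cluster. -/
lemma sum_mul_pairLoss {π : (ι → κ) → ℝ} (hπ1 : ∑ z, π z = 1) (a : ℝ) (i j : ι)
    (b : Prop) [Decidable b] :
    ∑ z : ι → κ, π z * (a * (if z i = z j then 1 else 0) * (if ¬b then 1 else 0)
        + (2 - a) * (if z i ≠ z j then 1 else 0) * (if b then 1 else 0)) =
      a * coclusterProb π i j + if b then 2 - a - 2 * coclusterProb π i j else 0 := by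
  by_cases hb : b
  · have h := sum_ite_ne_eq_one_sub_coclusterProb hπ1 i j
    simp only [hb, if_true, not_true_eq_false, if_false, mul_zero, mul_one, zero_add,
      mul_ite, ← sum_filter, ← sum_mul] at h ⊢
    linear_combination (2 - a) * h
  · simp only [hb, if_false, not_false_eq_true, if_true, mul_zero, add_zero, mul_one,
      coclusterProb, mul_sum]
    refine sum_congr rfl fun z _ => ?_
    split_ifs <;> ring

end Coclustering

section Risk

variable {ι κ : Type*} [Fintype ι] [LinearOrder ι] [DecidableEq κ]

def binderLoss (a : ℝ) (z zhat : ι → κ) : ℝ :=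
  ∑ i, ∑ j, if i < j then
    (a * (if z i = z j then 1 else 0) * (if zhat i ≠ zhat j then 1 else 0)
      + (2 - a) * (if z i ≠ z j then 1 else 0) * (if zhat i = zhat j then 1 else 0))
    else 0

def coclusteredSum (zhat : ι → κ) (f : ι → ι → ℝ) : ℝ :=
  ∑ i, ∑ j, if i < j ∧ zhat i = zhat j then f i j else 0

lemma coclusteredSum_of_injective {zhat : ι → κ} (hz : Function.Injective zhat)
    (f : ι → ι → ℝ) : coclusteredSum zhat f = 0 :=
  sum_eq_zero fun _ _ => sum_eq_zero fun _ _ => if_neg fun h => h.1.ne (hz h.2)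

lemma coclusteredSum_eq_zero {f : ι → ι → ℝ} (hf : ∀ i j, i < j → f i j = 0)
    (zhat : ι → κ) : coclusteredSum zhat f = 0 :=
  sum_eq_zero fun i _ => sum_eq_zero fun j _ => ite_eq_right_iff.2 fun h => hf i j h.1

lemma coclusteredSum_update_id {i j : ι} (hij : i < j) (f : ι → ι → ℝ) :
    coclusteredSum (Function.update id j i) f = f i j := by
  have hpair : ∀ k l,
      k < l ∧ Function.update id j i k = Function.update id j i l ↔ k = i ∧ l = j :=
    fun k l => ⟨fun h => (update_id_apply_eq_iff hij h.1).1 h.2,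
      fun h => ⟨h.1 ▸ h.2 ▸ hij, (update_id_apply_eq_iff hij (h.1 ▸ h.2 ▸ hij)).2 h⟩⟩
  simp only [coclusteredSum, hpair, ite_and]
  simp

variable [Fintype κ]

def priorRisk (π : (ι → κ) → ℝ) (a : ℝ) (zhat : ι → κ) : ℝ :=
  ∑ z, π z * binderLoss a z zhat

lemma priorRisk_eq {π : (ι → κ) → ℝ} (hπ1 : ∑ z, π z = 1) (a : ℝ) (zhat : ι → κ) :
    priorRisk π a zhat = ∑ i, ∑ j, (if i < j then a * coclusterProb π i j else 0)
      + coclusteredSum zhat (fun i j => 2 - a - 2 * coclusterProb π i j) := by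
  simp only [priorRisk, binderLoss, coclusteredSum, mul_sum, ← sum_add_distrib]
  rw [sum_comm]
  refine sum_congr rfl fun i _ => ?_
  rw [sum_comm]
  refine sum_congr rfl fun j _ => ?_
  by_cases hij : i < j
  · simp only [hij, if_true, true_and]
    exact sum_mul_pairLoss hπ1 a i j _
  · simp [hij]

theorem priorRisk_const_iff {π : (ι → ι) → ℝ} (hπ1 : ∑ z, π z = 1) (a : ℝ) :
    (∀ zhat zhat', priorRisk π a zhat = priorRisk π a zhat') ↔
      ∀ i j, i ≠ j → coclusterProb π i j = (2 - a) / 2 := by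
  constructor
  · intro hconst i j hij
    wlog hlt : i < j generalizing i j
    · rw [coclusterProb_comm]
      exact this j i hij.symm (hij.lt_or_gt.resolve_left hlt)
    have h := hconst (Function.update id j i) id
    rw [priorRisk_eq hπ1, priorRisk_eq hπ1, coclusteredSum_update_id hlt,
      coclusteredSum_of_injective Function.injective_id] at h
    linarith
  · intro hq zhat zhat'
    have hpair : ∀ i j, i < j → 2 - a - 2 * coclusterProb π i j = 0 := fun i j hij => by
      rw [hq i j hij.ne]
      ring
    simp only [priorRisk_eq hπ1, coclusteredSum_eq_zero hpair]

end Risk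

end BinderLoss

open BinderLoss in
theorem binder_riskEquilibrium_iff_coclustering_general
    (p : ℕ)
    (π : (Fin p → Fin p) → ℝ)
    (hπ1 : ∑ z : Fin p → Fin p, π z = 1)
    (a : ℝ)
    (L : (Fin p → Fin p) → (Fin p → Fin p) → ℝ)
    (hL : ∀ z zhat, L z zhat = ∑ i : Fin p, ∑ j : Fin p, if i < j then
      (a * (if z i = z j then 1 else 0) * (if zhat i ≠ zhat j then 1 else 0)
        + (2 - a) * (if z i ≠ z j then 1 else 0) * (if zhat i = zhat j then 1 else 0))
      else 0)
    (R : (Fin p → Fin p) → ℝ)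
    (hR : ∀ zhat, R zhat = ∑ z : Fin p → Fin p, π z * L z zhat) :
    (∀ zhat zhat' : Fin p → Fin p, R zhat = R zhat') ↔
      (∀ i j : Fin p, i ≠ j →
        (∑ z : Fin p → Fin p, (if z i = z j then π z else 0)) = (2 - a) / 2) := by
  obtain rfl : L = binderLoss a := funext fun z => funext (hL z)
  obtain rfl : R = priorRisk π a := funext hR
  exact priorRisk_const_iff hπ1 a

/-- Risk equilibrium characterization for generalized Binder's loss: for an
exchangeable prior on partitions of `{1,…,p}` (represented by cluster label vectors),
the prior risk is constant over all partitions iff the co-clustering probability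
equals `(2−a)/2` for every pair `i ≠ j`. -/
theorem binder_riskEquilibrium_iff_coclustering
    (p : ℕ) (hp : 2 ≤ p)
    (π : (Fin p → Fin p) → ℝ)
    (hπ : ∀ z, 0 ≤ π z) (hπ1 : ∑ z : Fin p → Fin p, π z = 1)
    (hexch : ∀ (σ : Equiv.Perm (Fin p)) (z : Fin p → Fin p), π (z ∘ σ) = π z)
    (a : ℝ) (ha : 0 < a) (ha2 : a < 2)
    (L : (Fin p → Fin p) → (Fin p → Fin p) → ℝ)
    (hL : ∀ z zhat, L z zhat = ∑ i : Fin p, ∑ j : Fin p, if i < j then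
      (a * (if z i = z j then 1 else 0) * (if zhat i ≠ zhat j then 1 else 0)
        + (2 - a) * (if z i ≠ z j then 1 else 0) * (if zhat i = zhat j then 1 else 0))
      else 0)
    (R : (Fin p → Fin p) → ℝ)
    (hR : ∀ zhat, R zhat = ∑ z : Fin p → Fin p, π z * L z zhat) :
    (∀ zhat zhat' : Fin p → Fin p, R zhat = R zhat') ↔
      (∀ i j : Fin p, i ≠ j →
        (∑ z : Fin p → Fin p, (if z i = z j then π z else 0)) = (2 - a) / 2) :=
  binder_riskEquilibrium_iff_coclustering_general p π hπ1 a L hL R hR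
end

section
/- Let p ≥ 1, a ∈ (0,2), and π a probability distribution on {0,1}^p equipped with the partial order γ ≺ γ' iff {i : γ_i = 1} ⊊ {i : γ'_i = 1}. The prior risk under generalized Hamming loss, R(γ̂) = Σ_i [a·π(γ_i=0)·1(γ̂_i=1) + (2−a)·π(γ_i=1)·1(γ̂_i=0)], is monotone nondecreasing with respect to ≺ (i.e., γ̂ ≺ γ̂' implies R(γ̂) ≤ R(γ̂')) if and only if π(γ_i = 1) ≤ a/2 for every i. -/
open Finset

/-- Risk penalization characterization for generalized Hamming loss: the prior risk is
nondecreasing along the complexity order (strict inclusion of supports) iff every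
marginal inclusion probability is at most `a/2`. -/
theorem riskPenalization_iff_marginal_le_half_a
    (p : ℕ) (hp : 1 ≤ p)
    (π : (Fin p → Bool) → ℝ)
    (hπ : ∀ γ, 0 ≤ π γ) (hπ1 : ∑ γ : Fin p → Bool, π γ = 1)
    (a : ℝ) (ha : 0 < a) (ha2 : a < 2)
    (R : (Fin p → Bool) → ℝ)
    (hR : ∀ ghat, R ghat = ∑ i : Fin p,
      (a * (∑ γ : Fin p → Bool, (if γ i = false then π γ else 0)) * (if ghat i = true then 1 else 0)
        + (2 - a) * (∑ γ : Fin p → Bool, (if γ i = true then π γ else 0)) * (if ghat i = false then 1 else 0))) :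
    (∀ ghat ghat' : Fin p → Bool,
        ((∀ i, ghat i = true → ghat' i = true) ∧ ghat ≠ ghat') → R ghat ≤ R ghat') ↔
      (∀ i : Fin p, (∑ γ : Fin p → Bool, (if γ i = true then π γ else 0)) ≤ a / 2) := by
  set m1 : Fin p → ℝ := fun i => ∑ γ : Fin p → Bool, (if γ i = true then π γ else 0) with hm1
  set m0 : Fin p → ℝ := fun i => ∑ γ : Fin p → Bool, (if γ i = false then π γ else 0) with hm0
  have hsum : ∀ i, m0 i + m1 i = 1 := by
    intro i
    rw [hm0, hm1]
    simp only
    rw [← hπ1, ← Finset.sum_add_distrib]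
    apply Finset.sum_congr rfl
    intro γ _
    cases h : γ i <;> simp [h]
  have key : ∀ i, (m1 i ≤ a / 2 ↔ (2 - a) * m1 i ≤ a * m0 i) := by
    intro i
    have h := hsum i
    constructor <;> intro hh <;> nlinarith [hsum i]
  constructor
  · intro hmono i
    have h := hmono (fun _ => false) (fun j => if j = i then true else false)
      ⟨fun j hj => by simpa using hj, by
        intro h
        have := congrFun h i
        simp at this⟩
    rw [hR, hR] at h
    have hdiff : (∑ j : Fin p,
        (a * m0 j * (if (if j = i then true else false) = true then 1 else 0)
          + (2 - a) * m1 j * (if (if j = i then true else false) = false then 1 else 0)))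
        - (∑ j : Fin p,
        (a * m0 j * (if (false : Bool) = true then 1 else 0)
          + (2 - a) * m1 j * (if (false : Bool) = false then 1 else 0)))
        = a * m0 i - (2 - a) * m1 i := by
      rw [← Finset.sum_sub_distrib]
      have : ∀ j ∈ Finset.univ (α := Fin p),
          (a * m0 j * (if (if j = i then true else false) = true then 1 else 0)
            + (2 - a) * m1 j * (if (if j = i then true else false) = false then 1 else 0))
          - (a * m0 j * (if (false : Bool) = true then 1 else 0)
            + (2 - a) * m1 j * (if (false : Bool) = false then 1 else 0))
          = if j = i then a * m0 i - (2 - a) * m1 i else 0 := by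
        intro j _
        by_cases hji : j = i <;> simp [hji] <;> ring
      rw [Finset.sum_congr rfl this, Finset.sum_ite_eq' Finset.univ i]
      simp
    have : (2 - a) * m1 i ≤ a * m0 i := by linarith
    exact (key i).mpr this
  · intro hbound ghat ghat' ⟨hle, _⟩
    rw [hR, hR]
    apply Finset.sum_le_sum
    intro i _
    have hki := (key i).mp (hbound i)
    cases h1 : ghat i
    · cases h2 : ghat' i <;> simp [h1, h2]
      exact hki
    · have h2 := hle i h1
      simp [h1, h2]
end

section
/- Let p ≥ 2 and let π be an exchangeable distribution on partitions of {1,…,p}, with the refinement partial order ρ ≺ ρ' meaning ρ' strictly refines ρ. Let a ∈ (0,2) and let R be the prior risk under generalized Binder's loss. Then R is nondecreasing with respect to ≺ if and only if the co-clustering probability c = P_π(z_i = z_j) satisfies c ≥ (2−a)/2. -/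
open Finset

/-- Risk penalization characterization for generalized Binder's loss: for an
exchangeable prior on partitions of `{1,…,p}` with co-clustering probability `c`,
the prior risk is nondecreasing along the refinement order iff `c ≥ (2−a)/2`. -/
theorem binder_riskPenalization_iff_coclustering_ge
    (p : ℕ) (hp : 2 ≤ p)
    (π : (Fin p → Fin p) → ℝ)
    (hπ : ∀ z, 0 ≤ π z) (hπ1 : ∑ z : Fin p → Fin p, π z = 1)
    (hexch : ∀ (σ : Equiv.Perm (Fin p)) (z : Fin p → Fin p), π (z ∘ σ) = π z)
    (c : ℝ)
    (hc : ∀ i j : Fin p, i ≠ j →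
      (∑ z : Fin p → Fin p, (if z i = z j then π z else 0)) = c)
    (a : ℝ) (ha : 0 < a) (ha2 : a < 2)
    (L : (Fin p → Fin p) → (Fin p → Fin p) → ℝ)
    (hL : ∀ z zhat, L z zhat = ∑ i : Fin p, ∑ j : Fin p, if i < j then
      (a * (if z i = z j then 1 else 0) * (if zhat i ≠ zhat j then 1 else 0)
        + (2 - a) * (if z i ≠ z j then 1 else 0) * (if zhat i = zhat j then 1 else 0))
      else 0)
    (R : (Fin p → Fin p) → ℝ)
    (hR : ∀ zhat, R zhat = ∑ z : Fin p → Fin p, π z * L z zhat) :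
    (∀ zhat zhat' : Fin p → Fin p,
        ((∀ i j, zhat' i = zhat' j → zhat i = zhat j) ∧
          ¬ (∀ i j, zhat i = zhat j ↔ zhat' i = zhat' j)) →
        R zhat ≤ R zhat') ↔
      (2 - a) / 2 ≤ c := by
  set N : ℝ := ∑ i : Fin p, ∑ j : Fin p, if i < j then (1:ℝ) else 0 with hN
  set S : (Fin p → Fin p) → ℝ := fun zhat => ∑ i : Fin p, ∑ j : Fin p,
    if i < j then (if zhat i = zhat j then (1:ℝ) else 0) else 0 with hS
  have key : ∀ zhat, R zhat = a * c * N + (2 - a - 2*c) * S zhat := by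
    intro zhat
    have step : R zhat = ∑ i : Fin p, ∑ j : Fin p, if i < j then
        (a*c + (2 - a - 2*c) * (if zhat i = zhat j then (1:ℝ) else 0)) else 0 := by
      rw [hR]
      simp_rw [hL, Finset.mul_sum]
      rw [Finset.sum_comm]
      refine Finset.sum_congr rfl fun i _ => ?_
      rw [Finset.sum_comm]
      refine Finset.sum_congr rfl fun j _ => ?_
      by_cases hij : i < j
      · simp only [hij, if_true]
        have hne : i ≠ j := ne_of_lt hij
        have h1 : ∑ z : Fin p → Fin p, π z * (if z i = z j then (1:ℝ) else 0) = c := by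
          rw [← hc i j hne]
          refine Finset.sum_congr rfl fun z _ => ?_
          by_cases h : z i = z j <;> simp [h]
        have h2 : ∑ z : Fin p → Fin p, π z * (if z i ≠ z j then (1:ℝ) else 0) = 1 - c := by
          have e : ∀ z : Fin p → Fin p, π z * (if z i ≠ z j then (1:ℝ) else 0)
              = π z - π z * (if z i = z j then (1:ℝ) else 0) := by
            intro z; by_cases h : z i = z j <;> simp [h]
          simp_rw [e]
          rw [Finset.sum_sub_distrib, hπ1, h1]
        by_cases hz : zhat i = zhat j
        · have e : ∀ z : Fin p → Fin p, π z *
              (a * (if z i = z j then (1:ℝ) else 0) * (if zhat i ≠ zhat j then 1 else 0)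
                + (2 - a) * (if z i ≠ z j then 1 else 0) * (if zhat i = zhat j then 1 else 0))
              = (2 - a) * (π z * (if z i ≠ z j then (1:ℝ) else 0)) := by
            intro z; simp only [hz, ne_eq, not_true_eq_false, if_false, if_true]; ring
          simp_rw [e]
          rw [← Finset.mul_sum, h2]
          simp only [hz, if_true]
          ring
        · have e : ∀ z : Fin p → Fin p, π z *
              (a * (if z i = z j then (1:ℝ) else 0) * (if zhat i ≠ zhat j then 1 else 0)
                + (2 - a) * (if z i ≠ z j then 1 else 0) * (if zhat i = zhat j then 1 else 0))
              = a * (π z * (if z i = z j then (1:ℝ) else 0)) := by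
            intro z; simp only [hz, ne_eq, not_false_eq_true, if_true, if_false]; ring
          simp_rw [e]
          rw [← Finset.mul_sum, h1]
          simp only [hz, if_false]
          ring
      · simp [hij]
    rw [step, hS, hN]
    rw [Finset.mul_sum, Finset.mul_sum, ← Finset.sum_add_distrib]
    refine Finset.sum_congr rfl fun i _ => ?_
    rw [Finset.mul_sum, Finset.mul_sum, ← Finset.sum_add_distrib]
    refine Finset.sum_congr rfl fun j _ => ?_
    by_cases hij : i < j <;> simp [hij] <;> ring
  have hNpos : 0 < N := by
    have h01 : (⟨0, by omega⟩ : Fin p) < (⟨1, by omega⟩ : Fin p) := by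
      simp [Fin.lt_def]
    have inner_nonneg : ∀ i : Fin p,
        (0:ℝ) ≤ ∑ j : Fin p, if i < j then (1:ℝ) else 0 := by
      intro i
      refine Finset.sum_nonneg fun j _ => ?_
      by_cases h : i < j <;> simp [h]
    have h1 : (1:ℝ) ≤ ∑ j : Fin p, if (⟨0, by omega⟩ : Fin p) < j then (1:ℝ) else 0 := by
      have := Finset.single_le_sum
        (f := fun j : Fin p => if (⟨0, by omega⟩ : Fin p) < j then (1:ℝ) else 0)
        (fun j _ => by by_cases h : (⟨0, by omega⟩ : Fin p) < j <;> simp [h])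
        (Finset.mem_univ (⟨1, by omega⟩ : Fin p))
      simpa [h01] using this
    have h2 : (1:ℝ) ≤ N := by
      rw [hN]
      calc (1:ℝ) ≤ ∑ j : Fin p, if (⟨0, by omega⟩ : Fin p) < j then (1:ℝ) else 0 := h1
        _ ≤ ∑ i : Fin p, ∑ j : Fin p, if i < j then (1:ℝ) else 0 :=
          Finset.single_le_sum (fun i _ => inner_nonneg i)
            (Finset.mem_univ (⟨0, by omega⟩ : Fin p))
    linarith
  constructor
  · intro h
    have i0 : Fin p := ⟨0, by omega⟩
    have i1 : Fin p := ⟨1, by omega⟩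
    have hyp : ((∀ i j : Fin p, (id i : Fin p) = id j → (fun _ => (⟨0, by omega⟩ : Fin p)) i = (fun _ => (⟨0, by omega⟩ : Fin p)) j) ∧
        ¬ (∀ i j : Fin p, (fun _ => (⟨0, by omega⟩ : Fin p)) i = (fun _ => (⟨0, by omega⟩ : Fin p)) j ↔ (id i : Fin p) = id j)) := by
      constructor
      · intro i j _; rfl
      · intro hcontra
        have := (hcontra (⟨0, by omega⟩ : Fin p) (⟨1, by omega⟩ : Fin p)).mp rfl
        simp [Fin.ext_iff] at this
    have hle := h (fun _ => (⟨0, by omega⟩ : Fin p)) id hyp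
    rw [key, key] at hle
    have hSconst : S (fun _ => (⟨0, by omega⟩ : Fin p)) = N := by
      rw [hS, hN]
      refine Finset.sum_congr rfl fun i _ => Finset.sum_congr rfl fun j _ => ?_
      by_cases hij : i < j <;> simp [hij]
    have hSid : S id = 0 := by
      rw [hS]
      refine Finset.sum_eq_zero fun i _ => Finset.sum_eq_zero fun j _ => ?_
      by_cases hij : i < j
      · simp [hij, ne_of_lt hij]
      · simp [hij]
    rw [hSconst, hSid] at hle
    have : (2 - a - 2*c) * N ≤ 0 := by linarith
    have ht : 2 - a - 2*c ≤ 0 := by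
      by_contra hcon
      push_neg at hcon
      nlinarith
    linarith
  · intro hcge zhat zhat' ⟨href, _⟩
    rw [key, key]
    have ht : 2 - a - 2*c ≤ 0 := by linarith
    have hSle : S zhat' ≤ S zhat := by
      rw [hS]
      refine Finset.sum_le_sum fun i _ => Finset.sum_le_sum fun j _ => ?_
      by_cases hij : i < j
      · simp only [hij, if_true]
        by_cases h' : zhat' i = zhat' j
        · simp [h', href i j h']
        · by_cases h : zhat i = zhat j <;> simp [h, h']
      · simp [hij]
    nlinarith
end

section
/- Under generalized Binder's loss with weight a ∈ (0,2) and an exchangeable prior π on partitions of {1,…,p} with co-clustering probability c, the prior risk satisfies R(ẑ) = a·c·(p choose 2) + (2 − a − 2c)·Σ_{i<j} 1(ẑ_i = ẑ_j) for every partition ẑ. -/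
open Finset

/-- Prior risk identity under generalized Binder's loss for an exchangeable prior with
co-clustering probability `c`:
`R(ẑ) = a·c·C(p,2) + (2−a−2c)·Σ_{i<j} 1(ẑ_i = ẑ_j)`. -/
theorem binder_prior_risk_formula
    (p : ℕ) (hp : 2 ≤ p)
    (π : (Fin p → Fin p) → ℝ)
    (hπ : ∀ z, 0 ≤ π z) (hπ1 : ∑ z : Fin p → Fin p, π z = 1)
    (hexch : ∀ (σ : Equiv.Perm (Fin p)) (z : Fin p → Fin p), π (z ∘ σ) = π z)
    (c : ℝ)
    (hc : ∀ i j : Fin p, i ≠ j →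
      (∑ z : Fin p → Fin p, (if z i = z j then π z else 0)) = c)
    (a : ℝ) (ha : 0 < a) (ha2 : a < 2)
    (L : (Fin p → Fin p) → (Fin p → Fin p) → ℝ)
    (hL : ∀ z zhat, L z zhat = ∑ i : Fin p, ∑ j : Fin p, if i < j then
      (a * (if z i = z j then 1 else 0) * (if zhat i ≠ zhat j then 1 else 0)
        + (2 - a) * (if z i ≠ z j then 1 else 0) * (if zhat i = zhat j then 1 else 0))
      else 0) :
    ∀ zhat : Fin p → Fin p,
      ∑ z : Fin p → Fin p, π z * L z zhat
        = a * c * (p.choose 2 : ℝ)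
          + (2 - a - 2 * c) * ∑ i : Fin p, ∑ j : Fin p,
              (if i < j then (if zhat i = zhat j then (1:ℝ) else 0) else 0) := by
  intro zhat
  have hcne : ∀ i j : Fin p, i ≠ j →
      (∑ z : Fin p → Fin p, (if z i ≠ z j then π z else 0)) = 1 - c := by
    intro i j hij
    have h1 := hc i j hij
    have hsplit : ∑ z : Fin p → Fin p, π z
        = (∑ z : Fin p → Fin p, (if z i = z j then π z else 0))
          + ∑ z : Fin p → Fin p, (if z i ≠ z j then π z else 0) := by
      rw [← Finset.sum_add_distrib]
      apply Finset.sum_congr rfl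
      intro z _
      by_cases h : z i = z j <;> simp [h]
    rw [hπ1, h1] at hsplit
    linarith
  have step1 : ∑ z : Fin p → Fin p, π z * L z zhat
      = ∑ i : Fin p, ∑ j : Fin p, if i < j then
          (a * c * (if zhat i ≠ zhat j then (1:ℝ) else 0)
           + (2 - a) * (1 - c) * (if zhat i = zhat j then (1:ℝ) else 0)) else 0 := by
    simp only [hL, Finset.mul_sum]
    rw [Finset.sum_comm]
    refine Finset.sum_congr rfl fun i _ => ?_
    rw [Finset.sum_comm]
    refine Finset.sum_congr rfl fun j _ => ?_
    by_cases hij : i < j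
    · simp only [hij, if_true]
      have hne : i ≠ j := ne_of_lt hij
      have key : (∑ z : Fin p → Fin p, π z *
            (a * (if z i = z j then (1:ℝ) else 0) * (if zhat i ≠ zhat j then 1 else 0)
              + (2 - a) * (if z i ≠ z j then 1 else 0) * (if zhat i = zhat j then 1 else 0)))
          = a * (if zhat i ≠ zhat j then (1:ℝ) else 0) *
              (∑ z : Fin p → Fin p, (if z i = z j then π z else 0))
            + (2 - a) * (if zhat i = zhat j then (1:ℝ) else 0) *
              (∑ z : Fin p → Fin p, (if z i ≠ z j then π z else 0)) := by
        rw [Finset.mul_sum, Finset.mul_sum, ← Finset.sum_add_distrib]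
        refine Finset.sum_congr rfl fun z _ => ?_
        by_cases h : z i = z j <;> simp [h] <;> ring
      rw [key, hc i j hne, hcne i j hne]
      ring
    · simp [hij]
  rw [step1]
  have hpairs : ∑ i : Fin p, ∑ j : Fin p, (if i < j then (1:ℝ) else 0) = (p.choose 2 : ℝ) := by
    have h1 : ∀ j : Fin p, ∑ i : Fin p, (if i < j then (1:ℝ) else 0) = ((j:ℕ):ℝ) := by
      intro j
      rw [Finset.sum_boole]
      have : (Finset.univ.filter (fun i : Fin p => i < j)) = Finset.Iio j := by
        ext i; simp
      rw [this, Fin.card_Iio]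
    rw [Finset.sum_comm]
    simp only [h1]
    rw [Fin.sum_univ_eq_sum_range (fun k => ((k:ℕ):ℝ)), ← Nat.cast_sum,
      Finset.sum_range_id, Nat.choose_two_right]
  rw [← hpairs, Finset.mul_sum, Finset.mul_sum, ← Finset.sum_add_distrib]
  refine Finset.sum_congr rfl fun i _ => ?_
  rw [Finset.mul_sum, Finset.mul_sum, ← Finset.sum_add_distrib]
  refine Finset.sum_congr rfl fun j _ => ?_
  by_cases hij : i < j
  · simp only [hij, if_true]
    by_cases h : zhat i = zhat j <;> simp [h] <;> ring
  · simp [hij]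
end

section
/- Fix c ≥ √2 − 1 with c ≤ 1. Define g : ℕ≥1 → ℝ by g(m) = m · log₂( m / (1 + c(m−1))² ). Then g is subadditive: g(m₁ + m₂) ≤ g(m₁) + g(m₂) for all positive integers m₁, m₂. -/
/-- For `c ≥ √2 − 1` (and `c ≤ 1`), the function
`g(m) = m·log₂(m/(1+c(m−1))²)` is subadditive on positive integers. -/
theorem g_subadditive
    (c : ℝ) (hc : Real.sqrt 2 - 1 ≤ c) (hc1 : c ≤ 1)
    (g : ℕ → ℝ)
    (hg : ∀ m : ℕ, g m = (m : ℝ) * Real.logb 2 ((m : ℝ) / (1 + c * ((m : ℝ) - 1))^2)) :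
    ∀ m₁ m₂ : ℕ, 1 ≤ m₁ → 1 ≤ m₂ → g (m₁ + m₂) ≤ g m₁ + g m₂ := by
  have h2 : Real.sqrt 2 ^ 2 = 2 := Real.sq_sqrt (by norm_num)
  have hsn : 0 ≤ Real.sqrt 2 := Real.sqrt_nonneg 2
  have hs1 : (1:ℝ) ≤ Real.sqrt 2 := by nlinarith
  have hc0 : 0 < c := by nlinarith
  have hkey : 0 ≤ c^2 + 2*c - 1 := by nlinarith
  set h : ℕ → ℝ := fun m => Real.logb 2 ((m:ℝ)/(1 + c*((m:ℝ)-1))^2) with hh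
  have hden : ∀ m : ℕ, 1 ≤ m → (1:ℝ) ≤ 1 + c*((m:ℝ)-1) := by
    intro m hm
    have : (1:ℝ) ≤ m := Nat.one_le_cast.mpr hm
    nlinarith
  have hstep : ∀ m : ℕ, 1 ≤ m → h (m+1) ≤ h m := by
    intro m hm
    have hm1 : (1:ℝ) ≤ m := Nat.one_le_cast.mpr hm
    have d1 := hden m hm
    have d2 := hden (m+1) (le_trans hm (Nat.le_succ m))
    push_cast at d2 ⊢
    simp only [hh]
    push_cast
    apply Real.logb_le_logb_of_le one_lt_two
    · positivity
    · rw [div_le_div_iff₀ (by positivity) (by positivity)]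
      have hfac : (0:ℝ) ≤ c^2 * (((m:ℝ)-1) * ((m:ℝ)+2)) := by
        apply mul_nonneg (sq_nonneg c)
        apply mul_nonneg (by linarith) (by linarith)
      nlinarith [hkey, hfac]
  have hanti : ∀ m n : ℕ, 1 ≤ m → m ≤ n → h n ≤ h m := by
    intro m n hm hmn
    induction n with
    | zero => omega
    | succ k ih =>
      rcases Nat.lt_or_ge m (k+1) with hlt | hge
      · have hk : m ≤ k := by omega
        exact le_trans (hstep k (by omega)) (ih hk)
      · have : m = k + 1 := by omega
        simp [this]
  intro m₁ m₂ h1 h2'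
  have hm1 : (0:ℝ) ≤ (m₁:ℝ) := Nat.cast_nonneg _
  have hm2 : (0:ℝ) ≤ (m₂:ℝ) := Nat.cast_nonneg _
  have e1 : g (m₁ + m₂) = ((m₁:ℝ) + m₂) * h (m₁ + m₂) := by
    rw [hg]; simp only [hh]; push_cast; ring
  have e2 : g m₁ = (m₁:ℝ) * h m₁ := by rw [hg]
  have e3 : g m₂ = (m₂:ℝ) * h m₂ := by rw [hg]
  rw [e1, e2, e3]
  have l1 : h (m₁ + m₂) ≤ h m₁ := hanti m₁ (m₁ + m₂) h1 (Nat.le_add_right _ _)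
  have l2 : h (m₁ + m₂) ≤ h m₂ := hanti m₂ (m₁ + m₂) h2' (Nat.le_add_left _ _)
  have := mul_le_mul_of_nonneg_left l1 hm1
  have := mul_le_mul_of_nonneg_left l2 hm2
  nlinarith
end

section
/- For c ∈ [0,1], the function h(m) = m / (1 + c(m−1))² defined on positive integers m is nonincreasing (equivalently, h(m+1) ≤ h(m) for all m ≥ 1) if and only if c ≥ √2 − 1. -/
/-- For `c ∈ [0,1]`, the function `h(m) = m/(1+c(m−1))²` on positive integers is
nonincreasing iff `c ≥ √2 − 1`. -/
theorem h_antitone_iff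
    (c : ℝ) (hc0 : 0 ≤ c) (hc1 : c ≤ 1)
    (h : ℕ → ℝ)
    (hh : ∀ m : ℕ, h m = (m : ℝ) / (1 + c * ((m : ℝ) - 1))^2) :
    (∀ m : ℕ, 1 ≤ m → h (m + 1) ≤ h m) ↔ Real.sqrt 2 - 1 ≤ c := by
  constructor
  · intro H
    have h12 := H 1 le_rfl
    rw [hh 2, hh 1] at h12
    norm_num at h12
    -- h12 : 2 / (1 + c)^2 ≤ 1
    have hpos : (0:ℝ) < (1 + c)^2 := by positivity
    have h2 : (2:ℝ) ≤ (1 + c)^2 := by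
      rw [div_le_one hpos] at h12; linarith
    have : Real.sqrt 2 ≤ 1 + c := by
      calc Real.sqrt 2 ≤ Real.sqrt ((1 + c)^2) := Real.sqrt_le_sqrt h2
        _ = 1 + c := Real.sqrt_sq (by linarith)
    linarith
  · intro hc m hm
    have hs : Real.sqrt 2 ≤ 1 + c := by linarith
    have hsq : (2:ℝ) ≤ (1 + c)^2 := by
      nlinarith [Real.sq_sqrt (by norm_num : (0:ℝ) ≤ 2), Real.sqrt_nonneg 2]
    have hkey : 0 ≤ c^2 + 2*c - 1 := by nlinarith
    have hmr : (1:ℝ) ≤ (m:ℝ) := by exact_mod_cast hm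
    rw [hh (m+1), hh m]
    have hd1 : (0:ℝ) < (1 + c * ((m:ℝ) - 1))^2 :=
      pow_pos (by nlinarith) 2
    have hd2 : (0:ℝ) < (1 + c * (((m:ℝ)+1) - 1))^2 :=
      pow_pos (by nlinarith) 2
    push_cast
    rw [div_le_div_iff₀ hd2 hd1]
    nlinarith [sq_nonneg ((m:ℝ) - 1), sq_nonneg (m:ℝ), mul_nonneg hc0 (sub_nonneg.mpr hmr),
      mul_nonneg (mul_nonneg hc0 hc0) (sub_nonneg.mpr hmr),
      mul_le_mul_of_nonneg_left hkey (by nlinarith : (0:ℝ) ≤ (m:ℝ)^2 + (m:ℝ) - 1)]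
end

section
/- Under the Chinese restaurant process with parameter θ > 0 on partitions of {1,…,p} (p ≥ 2), the co-clustering probability P(z_i = z_j) equals 1/(θ+1) for all i ≠ j. Consequently, CRP(θ) with θ = a/(2−a) is a risk equilibrium prior with respect to generalized Binder's loss with weight a ∈ (0,2). -/
open Finset

/-- Sequential probability of a cluster-label sequence (given in reverse order, most
recent label first) under the Chinese restaurant process with parameter `θ`: an
existing label `j` is chosen with probability `count j/(θ+i)` and a new label (the
current number of distinct labels, in restricted-growth coding) with probability
`θ/(θ+i)`. -/
noncomputable def crpAux (θ : ℝ) : List ℕ → ℝ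
  | [] => 1
  | j :: prev =>
      crpAux θ prev *
        (if 0 < prev.count j then (prev.count j : ℝ) / (θ + prev.length)
         else if j = prev.dedup.length then θ / (θ + prev.length)
         else 0)

/-- Probability of the label vector `z` under CRP(θ). -/
noncomputable def crpProb (θ : ℝ) (p : ℕ) (z : Fin p → Fin p) : ℝ :=
  crpAux θ ((List.ofFn fun i => (z i : ℕ)).reverse)

/-!
Marginalizing the last customer of CRP(θ) returns CRP(θ) on the first `n` customers: on tuples
of positive probability the labels are in restricted-growth form, so the new-table label is
unused and the seating probabilities of customer `n + 1` sum to one. Hence pairs among the first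
`n` customers keep their co-clustering probability, while customer `n + 1` joins customer `i`
with probability `E[size of i's cluster] / (θ + n)`, which by induction is
`(1 + (n - 1)/(θ + 1)) / (θ + n) = 1/(θ + 1)`.

For Binder's loss, a pair with co-clustering probability `q` contributes
`a q u + (2 - a)(1 - q)(1 - u)` to the expected loss, where `u ∈ {0, 1}` records whether the
estimate separates the pair. For `q = (2 - a)/2`, i.e. `θ = a/(2 - a)`, both coefficients equal
`a (2 - a)/2`, so the expected loss does not depend on the estimate.
-/

namespace CRP

noncomputable def crpStep (θ : ℝ) (l : List ℕ) (a : ℕ) : ℝ :=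
  if 0 < l.count a then (l.count a : ℝ) / (θ + l.length)
  else if a = l.dedup.length then θ / (θ + l.length) else 0

theorem crpAux_cons (θ : ℝ) (a : ℕ) (l : List ℕ) :
    crpAux θ (a :: l) = crpAux θ l * crpStep θ l a := rfl

theorem lt_dedup_length_of_crpAux_ne_zero {θ : ℝ} {l : List ℕ} (h : crpAux θ l ≠ 0) :
    ∀ x ∈ l, x < l.dedup.length := by
  induction l with
  | nil => simp
  | cons a l ih =>
    rw [crpAux_cons] at h
    have hl := ih (left_ne_zero_of_mul h)
    have hstep := right_ne_zero_of_mul h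
    by_cases ha : a ∈ l
    · rw [List.dedup_cons_of_mem ha]
      exact List.forall_mem_cons.mpr ⟨hl a ha, hl⟩
    · have hnew : a = l.dedup.length := by
        by_contra hne
        simp [crpStep, List.count_eq_zero_of_not_mem ha, hne] at hstep
      rw [List.dedup_cons_of_notMem ha, List.length_cons]
      intro x hx
      rcases List.mem_cons.mp hx with rfl | hx
      · omega
      · exact (hl x hx).trans (Nat.lt_succ_self _)

theorem dedup_length_not_mem_of_crpAux_ne_zero {θ : ℝ} {l : List ℕ} (h : crpAux θ l ≠ 0) :
    l.dedup.length ∉ l :=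
  fun hmem => lt_irrefl _ (lt_dedup_length_of_crpAux_ne_zero h _ hmem)

theorem crpStep_eq_of_not_mem (θ : ℝ) {l : List ℕ} (hnew : l.dedup.length ∉ l) (a : ℕ) :
    crpStep θ l a = (l.count a : ℝ) / (θ + l.length)
      + if a = l.dedup.length then θ / (θ + l.length) else 0 := by
  by_cases ha : a ∈ l
  · have hne : a ≠ l.dedup.length := fun he => hnew (he ▸ ha)
    simp [crpStep, List.count_pos_iff.mpr ha, hne]
  · simp [crpStep, List.count_eq_zero_of_not_mem ha]

theorem sum_crpStep_eq_one {θ : ℝ} (hθ : 0 < θ) {m : ℕ} {l : List ℕ}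
    (hl : ∀ x ∈ l, x < m) (hlen : l.length < m) (hnew : l.dedup.length ∉ l) :
    ∑ a : Fin m, crpStep θ l a = 1 := by
  have hpos : 0 < θ + l.length := by positivity
  have hdedup : l.dedup.length < m := (List.dedup_sublist l).length_le.trans_lt hlen
  have hcount : ∑ a ∈ range m, (l.count a : ℝ) = l.length := by
    have := Multiset.sum_count_eq_card (s := range m) (m := (l : Multiset ℕ))
      (fun x hx => mem_range.mpr (hl x hx))
    simp only [Multiset.coe_count, Multiset.coe_card] at this
    exact_mod_cast this
  rw [Fin.sum_univ_eq_sum_range (crpStep θ l) m]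
  simp only [crpStep_eq_of_not_mem θ hnew]
  rw [sum_add_distrib, ← sum_div, hcount, sum_ite_eq' _ _ (fun _ => θ / (θ + l.length)),
    if_pos (mem_range.mpr hdedup)]
  field_simp
  ring

variable {θ : ℝ} {n m : ℕ}

def labelList (f : Fin n → Fin m) : List ℕ :=
  (List.ofFn fun i => (f i : ℕ)).reverse

noncomputable def tupleProb (θ : ℝ) (f : Fin n → Fin m) : ℝ :=
  crpAux θ (labelList f)

theorem labelList_snoc (f : Fin n → Fin m) (a : Fin m) :
    labelList (Fin.snoc f a : Fin (n + 1) → Fin m) = (a : ℕ) :: labelList f := by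
  rw [labelList, List.ofFn_succ', List.concat_eq_append, List.reverse_append]
  simp only [Fin.snoc_last, Fin.snoc_castSucc, List.reverse_singleton, List.singleton_append,
    labelList]

theorem length_labelList (f : Fin n → Fin m) : (labelList f).length = n := by
  simp [labelList]

theorem lt_of_mem_labelList {f : Fin n → Fin m} {x : ℕ} (hx : x ∈ labelList f) : x < m := by
  obtain ⟨i, rfl⟩ := List.mem_ofFn.mp (List.mem_reverse.mp hx)
  exact (f i).is_lt

theorem count_labelList (f : Fin n → Fin m) (a : Fin m) :
    (labelList f).count (a : ℕ) = #{i | f i = a} := by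
  rw [labelList, List.count_reverse, ← Multiset.coe_count, ← Fin.univ_val_map,
    Multiset.count_map]
  simp only [Fin.val_inj, eq_comm]
  rfl

theorem tupleProb_snoc (θ : ℝ) (f : Fin n → Fin m) (a : Fin m) :
    tupleProb θ (Fin.snoc f a : Fin (n + 1) → Fin m)
      = tupleProb θ f * crpStep θ (labelList f) a := by
  rw [tupleProb, labelList_snoc, crpAux_cons, tupleProb]

theorem sum_tupleProb_snoc (hθ : 0 < θ) (hn : n < m) (f : Fin n → Fin m) :
    ∑ a : Fin m, tupleProb θ (Fin.snoc f a : Fin (n + 1) → Fin m) = tupleProb θ f := by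
  simp only [tupleProb_snoc, ← mul_sum]
  by_cases h : tupleProb θ f = 0
  · rw [h, zero_mul]
  · rw [sum_crpStep_eq_one hθ (fun _ => lt_of_mem_labelList) (by rwa [length_labelList])
      (dedup_length_not_mem_of_crpAux_ne_zero h), mul_one]

theorem sum_snoc {M : Type*} [AddCommMonoid M] (g : (Fin (n + 1) → Fin m) → M) :
    ∑ z, g z = ∑ f : Fin n → Fin m, ∑ a, g (Fin.snoc f a) := by
  rw [← (Fin.snocEquiv fun _ => Fin m).sum_comp, Fintype.sum_prod_type, sum_comm]
  rfl

theorem sum_tupleProb (hθ : 0 < θ) (hn : n ≤ m) :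
    ∑ f : Fin n → Fin m, tupleProb θ f = 1 := by
  induction n with
  | zero => simp [tupleProb, labelList, crpAux]
  | succ n ih =>
    rw [sum_snoc]
    simp only [sum_tupleProb_snoc hθ hn]
    exact ih (by omega)

noncomputable def coclusterProb (θ : ℝ) (m : ℕ) (i j : Fin n) : ℝ :=
  ∑ f : Fin n → Fin m, if f i = f j then tupleProb θ f else 0

theorem coclusterProb_comm (θ : ℝ) (m : ℕ) (i j : Fin n) :
    coclusterProb θ m i j = coclusterProb θ m j i := by
  simp only [coclusterProb, eq_comm]

theorem coclusterProb_self (hθ : 0 < θ) (hn : n ≤ m) (i : Fin n) :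
    coclusterProb θ m i i = 1 := by
  simpa [coclusterProb] using sum_tupleProb hθ hn

theorem coclusterProb_castSucc (hθ : 0 < θ) (hn : n < m) (i j : Fin n) :
    coclusterProb θ m i.castSucc j.castSucc = coclusterProb θ m i j := by
  rw [coclusterProb, sum_snoc]
  refine sum_congr rfl fun f _ => ?_
  simp only [Fin.snoc_castSucc]
  split_ifs
  · exact sum_tupleProb_snoc hθ hn f
  · exact sum_const_zero

theorem sum_ite_tupleProb_snoc (θ : ℝ) (f : Fin n → Fin m) (i : Fin n) :
    ∑ a, (if f i = a then tupleProb θ (Fin.snoc f a : Fin (n + 1) → Fin m) else 0)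
      = tupleProb θ f * #{k | f k = f i} / (θ + n) := by
  have hpos : 0 < (labelList f).count (f i : ℕ) := by
    rw [count_labelList]
    exact card_pos.mpr ⟨i, by simp⟩
  rw [sum_ite_eq, if_pos (mem_univ _), tupleProb_snoc, crpStep, if_pos hpos, count_labelList,
    length_labelList, mul_div_assoc]

theorem coclusterProb_castSucc_last (hθ : 0 < θ) (hn : n ≤ m)
    (hpair : ∀ k l : Fin n, k ≠ l → coclusterProb θ m k l = 1 / (θ + 1)) (i : Fin n) :
    coclusterProb θ m i.castSucc (Fin.last n) = 1 / (θ + 1) := by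
  have hcount (f : Fin n → Fin m) :
      tupleProb θ f * #{k | f k = f i} = ∑ k, if f k = f i then tupleProb θ f else 0 := by
    rw [card_filter, Nat.cast_sum, mul_sum]
    exact sum_congr rfl fun k _ => by split_ifs <;> simp
  have hk (k : Fin n) :
      coclusterProb θ m k i = 1 / (θ + 1) + if k = i then θ / (θ + 1) else 0 := by
    by_cases hki : k = i
    · rw [hki, coclusterProb_self hθ hn, if_pos rfl]
      field_simp
      ring
    · rw [hpair k i hki, if_neg hki, add_zero]
  calc coclusterProb θ m i.castSucc (Fin.last n)
      = ∑ f : Fin n → Fin m, tupleProb θ f * #{k | f k = f i} / (θ + n) := by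
        rw [coclusterProb, sum_snoc]
        simp only [Fin.snoc_castSucc, Fin.snoc_last, sum_ite_tupleProb_snoc]
    _ = (∑ k, coclusterProb θ m k i) / (θ + n) := by
        simp only [← sum_div, hcount, coclusterProb]
        rw [sum_comm]
    _ = 1 / (θ + 1) := by
        simp only [hk, sum_add_distrib, sum_ite_eq', mem_univ, if_true, sum_const, card_univ,
          Fintype.card_fin, nsmul_eq_mul]
        field_simp
        ring

theorem coclusterProb_eq (hθ : 0 < θ) (hn : n ≤ m) {i j : Fin n} (hij : i ≠ j) :
    coclusterProb θ m i j = 1 / (θ + 1) := by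
  induction n with
  | zero => exact i.elim0
  | succ n ih =>
    have hpair (k l : Fin n) (hkl : k ≠ l) := ih (by omega) hkl
    rcases Fin.eq_castSucc_or_eq_last i with ⟨i, rfl⟩ | rfl <;>
      rcases Fin.eq_castSucc_or_eq_last j with ⟨j, rfl⟩ | rfl
    · rw [coclusterProb_castSucc hθ hn]
      exact hpair i j (fun h => hij (h ▸ rfl))
    · exact coclusterProb_castSucc_last hθ (by omega) hpair i
    · rw [coclusterProb_comm]
      exact coclusterProb_castSucc_last hθ (by omega) hpair j
    · exact absurd rfl hij

theorem crpProb_eq_tupleProb (θ : ℝ) (p : ℕ) : crpProb θ p = tupleProb θ := rfl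

end CRP

section Binder

variable {ι κ : Type*} [DecidableEq κ]

def binderPairLoss (a : ℝ) (z zhat : ι → κ) (i j : ι) : ℝ :=
  a * (if z i = z j then 1 else 0) * (if zhat i ≠ zhat j then 1 else 0)
    + (2 - a) * (if z i ≠ z j then 1 else 0) * (if zhat i = zhat j then 1 else 0)

variable [Fintype ι] [Fintype κ]

def binderLoss [LinearOrder ι] (a : ℝ) (z zhat : ι → κ) : ℝ :=
  ∑ i, ∑ j, if i < j then binderPairLoss a z zhat i j else 0

theorem sum_mul_binderPairLoss [DecidableEq ι] {π : (ι → κ) → ℝ} {a : ℝ} {i j : ι}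
    (hπ : ∑ z, π z = 1) (hco : ∑ z, (if z i = z j then π z else 0) = (2 - a) / 2)
    (zhat : ι → κ) :
    ∑ z, π z * binderPairLoss a z zhat i j = a * (2 - a) / 2 := by
  set u : ℝ := if zhat i ≠ zhat j then 1 else 0
  set v : ℝ := if zhat i = zhat j then 1 else 0
  have huv : u + v = 1 := by by_cases h : zhat i = zhat j <;> simp [u, v, h]
  have hterm (z : ι → κ) : π z * binderPairLoss a z zhat i j
      = (a * u - (2 - a) * v) * (if z i = z j then π z else 0) + (2 - a) * v * π z := by
    by_cases h : z i = z j <;>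
      simp only [binderPairLoss, h, u, v, ne_eq, not_true_eq_false, not_false_eq_true, if_true,
        if_false] <;> ring
  rw [sum_congr rfl fun z _ => hterm z, sum_add_distrib, ← mul_sum, ← mul_sum, hco, hπ]
  linear_combination a * (2 - a) / 2 * huv

theorem sum_mul_binderLoss [LinearOrder ι] {π : (ι → κ) → ℝ} {a : ℝ} (hπ : ∑ z, π z = 1)
    (hco : ∀ i j, i ≠ j → ∑ z, (if z i = z j then π z else 0) = (2 - a) / 2)
    (zhat : ι → κ) :
    ∑ z, π z * binderLoss a z zhat = ∑ i : ι, ∑ j : ι, if i < j then a * (2 - a) / 2 else 0 := by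
  simp only [binderLoss, mul_sum]
  rw [sum_comm]
  refine sum_congr rfl fun i _ => ?_
  rw [sum_comm]
  refine sum_congr rfl fun j _ => ?_
  by_cases hij : i < j
  · simp only [if_pos hij]
    exact sum_mul_binderPairLoss hπ (hco i j hij.ne) zhat
  · simp only [if_neg hij, mul_zero, sum_const_zero]

end Binder

theorem crp_coclustering_and_risk_equilibrium_general
    (p : ℕ) (θ : ℝ) (hθ : 0 < θ) :
    (∀ i j : Fin p, i ≠ j →
      (∑ z : Fin p → Fin p, (if z i = z j then crpProb θ p z else 0)) = 1 / (θ + 1)) ∧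
    (∀ a : ℝ, 0 < a → a < 2 → θ = a / (2 - a) →
      ∀ zhat zhat' : Fin p → Fin p,
        (∑ z : Fin p → Fin p, crpProb θ p z *
          ∑ i : Fin p, ∑ j : Fin p, (if i < j then
            (a * (if z i = z j then 1 else 0) * (if zhat i ≠ zhat j then 1 else 0)
              + (2 - a) * (if z i ≠ z j then 1 else 0) * (if zhat i = zhat j then 1 else 0))
            else 0))
        = (∑ z : Fin p → Fin p, crpProb θ p z *
          ∑ i : Fin p, ∑ j : Fin p, (if i < j then
            (a * (if z i = z j then 1 else 0) * (if zhat' i ≠ zhat' j then 1 else 0)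
              + (2 - a) * (if z i ≠ z j then 1 else 0) * (if zhat' i = zhat' j then 1 else 0))
            else 0))) := by
  rw [CRP.crpProb_eq_tupleProb]
  have hco (i j : Fin p) (hij : i ≠ j) : CRP.coclusterProb θ p i j = 1 / (θ + 1) :=
    CRP.coclusterProb_eq hθ le_rfl hij
  refine ⟨hco, fun a _ ha2 hθa zhat zhat' => ?_⟩
  have hq : 1 / (θ + 1) = (2 - a) / 2 := by
    rw [hθa]
    field_simp [(by linarith : 2 - a ≠ 0)]
    ring
  have hrisk := sum_mul_binderLoss (CRP.sum_tupleProb hθ le_rfl)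
    fun i j hij => (hco i j hij).trans hq
  exact (hrisk zhat).trans (hrisk zhat').symm

/-- Under CRP(θ) the co-clustering probability is `1/(θ+1)`; consequently, CRP with
`θ = a/(2−a)` is a risk equilibrium prior with respect to generalized Binder's loss
with weight `a ∈ (0,2)`. -/
theorem crp_coclustering_and_risk_equilibrium
    (p : ℕ) (hp : 2 ≤ p) (θ : ℝ) (hθ : 0 < θ) :
    (∀ i j : Fin p, i ≠ j →
      (∑ z : Fin p → Fin p, (if z i = z j then crpProb θ p z else 0)) = 1 / (θ + 1)) ∧
    (∀ a : ℝ, 0 < a → a < 2 → θ = a / (2 - a) →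
      ∀ zhat zhat' : Fin p → Fin p,
        (∑ z : Fin p → Fin p, crpProb θ p z *
          ∑ i : Fin p, ∑ j : Fin p, (if i < j then
            (a * (if z i = z j then 1 else 0) * (if zhat i ≠ zhat j then 1 else 0)
              + (2 - a) * (if z i ≠ z j then 1 else 0) * (if zhat i = zhat j then 1 else 0))
            else 0))
        = (∑ z : Fin p → Fin p, crpProb θ p z *
          ∑ i : Fin p, ∑ j : Fin p, (if i < j then
            (a * (if z i = z j then 1 else 0) * (if zhat' i ≠ zhat' j then 1 else 0)
              + (2 - a) * (if z i ≠ z j then 1 else 0) * (if zhat' i = zhat' j then 1 else 0))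
            else 0))) :=
  crp_coclustering_and_risk_equilibrium_general p θ hθ
end

section
/- Let p ≥ 2, κ ≥ 2, and 1 ≤ s_max ≤ p. Define a prior on {0,1}^p by π(γ) ∝ p^{−κ|γ|}·1(|γ| ≤ s_max), where |γ| = Σ_i γ_i. Then the marginal inclusion probability satisfies π(γ_i = 1) ≤ 1/2 for every i. Consequently π is a risk penalization prior with respect to the Hamming loss. -/
open Finset

/-- The exponentially decaying, size-truncated prior `π(γ) ∝ p^{−κ|γ|}·1(|γ| ≤ s_max)`
of Yang et al. has all marginal inclusion probabilities at most `1/2`; consequently it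
is a risk penalization prior with respect to the Hamming loss. -/
theorem truncated_prior_risk_penalization
    (p : ℕ) (hp : 2 ≤ p) (κ : ℝ) (hκ : 2 ≤ κ)
    (smax : ℕ) (hs1 : 1 ≤ smax) (hsp : smax ≤ p)
    (w : (Fin p → Bool) → ℝ)
    (hw : ∀ γ, w γ = (p : ℝ) ^ (-(κ * ((Finset.univ.filter fun i => γ i = true).card : ℝ)))
        * (if (Finset.univ.filter fun i => γ i = true).card ≤ smax then 1 else 0))
    (Z : ℝ) (hZ : Z = ∑ γ : Fin p → Bool, w γ)
    (π : (Fin p → Bool) → ℝ) (hπ : ∀ γ, π γ = w γ / Z)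
    (R : (Fin p → Bool) → ℝ)
    (hR : ∀ ghat, R ghat = ∑ γ : Fin p → Bool, π γ *
      ∑ i : Fin p, (if γ i ≠ ghat i then (1:ℝ) else 0)) :
    (∀ i : Fin p, (∑ γ : Fin p → Bool, (if γ i = true then π γ else 0)) ≤ 1 / 2) ∧
    (∀ ghat ghat' : Fin p → Bool,
      ((∀ i, ghat i = true → ghat' i = true) ∧ ghat ≠ ghat') → R ghat ≤ R ghat') := by
  have hp1 : (1:ℝ) ≤ (p:ℝ) := by exact_mod_cast (le_trans (by norm_num) hp)
  -- weights nonnegative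
  have hwnn : ∀ γ, 0 ≤ w γ := by
    intro γ; rw [hw]
    apply mul_nonneg (Real.rpow_nonneg (by positivity) _)
    split <;> norm_num
  -- Z ≥ 1 (take γ = all false)
  have hZ1 : (1:ℝ) ≤ Z := by
    have h0 : w (fun _ => false) = 1 := by
      rw [hw]
      simp
    rw [hZ]
    calc (1:ℝ) = w (fun _ => false) := h0.symm
      _ ≤ ∑ γ : Fin p → Bool, w γ :=
        Finset.single_le_sum (fun γ _ => hwnn γ) (Finset.mem_univ _)
  have hZpos : 0 < Z := lt_of_lt_of_le one_pos hZ1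
  -- the flip-at-i involution
  have key : ∀ i : Fin p,
      (∑ γ : Fin p → Bool, if γ i = true then w γ else 0)
        ≤ (∑ γ : Fin p → Bool, if γ i = true then 0 else w γ) := by
    intro i
    have hinv : Function.Involutive
        (fun γ : Fin p → Bool => Function.update γ i (!(γ i))) := by
      intro γ; funext j
      rcases eq_or_ne j i with rfl | h
      · simp [Function.update]
      · simp [Function.update_of_ne h]
    set e := hinv.toPerm with he
    have hei : ∀ γ : Fin p → Bool, (e γ) i = !(γ i) := by
      intro γ; simp [he, Function.Involutive.toPerm]
    have hsub : ∀ γ : Fin p → Bool,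
        (Finset.univ.filter fun j => (e γ) j = true)
          ⊆ (Finset.univ.filter fun j => γ j = true) ∪ {i} := by
      intro γ j hj
      simp only [Finset.mem_filter, Finset.mem_univ, true_and] at hj
      rcases eq_or_ne j i with rfl | h
      · simp
      · simp only [he, Function.Involutive.toPerm, Equiv.coe_fn_mk,
          Function.update_of_ne h] at hj
        simp [hj]
    -- reindex RHS by e
    have hre : (∑ γ : Fin p → Bool, if γ i = true then 0 else w γ)
        = ∑ γ : Fin p → Bool, if (e γ) i = true then 0 else w (e γ) :=
      (Equiv.sum_comp e (fun γ => if γ i = true then 0 else w γ)).symm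
    rw [hre]
    apply Finset.sum_le_sum
    intro γ _
    have hwle : γ i = true → w γ ≤ w (e γ) := by
      intro hb
      -- card inequality : |e γ| ≤ |γ|
      have hcard : (Finset.univ.filter fun j => (e γ) j = true).card
          ≤ (Finset.univ.filter fun j => γ j = true).card := by
        apply Finset.card_le_card
        intro j hj
        simp only [Finset.mem_filter, Finset.mem_univ, true_and] at hj ⊢
        rcases eq_or_ne j i with rfl | h
        · simp [hei, hb] at hj
        · simpa [he, Function.Involutive.toPerm, Function.update_of_ne h] using hj
      rw [hw γ, hw (e γ)]
      by_cases hind : (Finset.univ.filter fun j => γ j = true).card ≤ smax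
      · rw [if_pos hind, if_pos (le_trans hcard hind), mul_one, mul_one]
        apply Real.rpow_le_rpow_of_exponent_le hp1
        have : (0:ℝ) ≤ κ := le_trans (by norm_num) hκ
        have hc : ((Finset.univ.filter fun j => (e γ) j = true).card : ℝ)
            ≤ ((Finset.univ.filter fun j => γ j = true).card : ℝ) := by exact_mod_cast hcard
        nlinarith
      · rw [if_neg hind, mul_zero]
        apply mul_nonneg (Real.rpow_nonneg (by positivity) _)
        split <;> norm_num
    rcases hb : γ i with _ | _
    · simp [hei, hb]
    · simpa [hei, hb] using hwle hb
  -- masses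
  have hsplit : ∀ i : Fin p,
      (∑ γ : Fin p → Bool, if γ i = true then w γ else 0)
        + (∑ γ : Fin p → Bool, if γ i = true then 0 else w γ) = Z := by
    intro i
    rw [hZ, ← Finset.sum_add_distrib]
    apply Finset.sum_congr rfl
    intro γ _
    split <;> ring
  -- part 1 : marginal bound in w-form
  have marg : ∀ i : Fin p,
      (∑ γ : Fin p → Bool, if γ i = true then w γ else 0) ≤ Z / 2 := by
    intro i
    have := key i
    have := hsplit i
    linarith
  have part1 : ∀ i : Fin p,
      (∑ γ : Fin p → Bool, (if γ i = true then π γ else 0)) ≤ 1 / 2 := by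
    intro i
    have heq : (∑ γ : Fin p → Bool, (if γ i = true then π γ else 0))
        = (∑ γ : Fin p → Bool, if γ i = true then w γ else 0) / Z := by
      rw [Finset.sum_div]
      apply Finset.sum_congr rfl
      intro γ _
      rw [hπ]
      split <;> simp
    rw [heq, div_le_iff₀ hZpos]
    have := marg i
    linarith
  refine ⟨part1, ?_⟩
  -- part 2
  intro ghat ghat' ⟨hmono, _⟩
  have hR2 : ∀ g : Fin p → Bool, R g = ∑ i : Fin p, ∑ γ : Fin p → Bool,
      π γ * (if γ i ≠ g i then (1:ℝ) else 0) := by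
    intro g
    rw [hR]
    simp only [Finset.mul_sum]
    rw [Finset.sum_comm]
  rw [hR2, hR2]
  apply Finset.sum_le_sum
  intro i _
  -- coordinatewise comparison
  have hT : ∀ b : Bool, (∑ γ : Fin p → Bool, π γ * (if γ i ≠ b then (1:ℝ) else 0))
      = if b then (∑ γ : Fin p → Bool, if γ i = true then 0 else w γ) / Z
        else (∑ γ : Fin p → Bool, if γ i = true then w γ else 0) / Z := by
    intro b
    cases b <;>
    · simp only [if_true, if_false, Finset.sum_div]
      apply Finset.sum_congr rfl
      intro γ _
      rw [hπ]
      cases hgi : γ i <;> simp [hgi]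
  rcases hgg : ghat i with h1 | h1 <;> rcases hgg' : ghat' i with h2 | h2
  · exact le_refl _
  · -- ghat i = false, ghat' i = true
    rw [hT, hT]
    norm_num
    gcongr ?_ / Z
    exact key i
  · exact absurd (hmono i hgg) (by rw [hgg']; simp)
  · exact le_refl _
end

section
/- Let M = {0,1}² with elements M₀₀, M₀₁, M₁₀, M₁₁ and the symmetric loss L given by L(M₀₀,M₀₁)=L(M₀₀,M₁₀)=1, L(M₀₀,M₁₁)=2, L(M₀₁,M₁₀)=3, L(M₀₁,M₁₁)=L(M₁₀,M₁₁)=4, and L(M,M)=0. Then there is no probability distribution π on M such that the prior risk R(M̂) = Σ_M L(M,M̂)π(M) is constant over M. -/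
open Finset

/-- Counterexample: for this symmetric loss on `{0,1}²` there exists no probability
distribution whose prior risk is constant (no risk equilibrium prior). -/
theorem no_risk_equilibrium_prior_exists
    (L : Bool × Bool → Bool × Bool → ℝ)
    (hdiag : ∀ m, L m m = 0)
    (hsymm : ∀ m m', L m m' = L m' m)
    (h1 : L (false, false) (false, true) = 1)
    (h2 : L (false, false) (true, false) = 1)
    (h3 : L (false, false) (true, true) = 2)
    (h4 : L (false, true) (true, false) = 3)
    (h5 : L (false, true) (true, true) = 4)
    (h6 : L (true, false) (true, true) = 4) :
    ¬ ∃ π : Bool × Bool → ℝ,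
      (∀ m, 0 ≤ π m) ∧ (∑ m : Bool × Bool, π m = 1) ∧
      (∀ mhat mhat' : Bool × Bool,
        (∑ m : Bool × Bool, L m mhat * π m) = (∑ m : Bool × Bool, L m mhat' * π m)) := by
  rintro ⟨π, hpos, hsum, heq⟩
  have e1 := heq (false, true) (true, false)
  have e2 := heq (false, false) (false, true)
  simp only [Fintype.sum_prod_type, Fintype.sum_bool, hdiag,
    hsymm (false, true) (false, false), hsymm (true, false) (false, false),
    hsymm (true, true) (false, false), hsymm (true, false) (false, true),
    hsymm (true, true) (false, true), hsymm (true, true) (true, false),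
    h1, h2, h3, h4, h5, h6] at e1 e2
  have p1 := hpos (false, false)
  have p2 := hpos (false, true)
  have p3 := hpos (true, false)
  have p4 := hpos (true, true)
  simp only [Fintype.sum_prod_type, Fintype.sum_bool] at hsum
  linarith
end

section
/- Let M = {0,1}² with the symmetric loss L given by L(M₀₀,M₀₁)=L(M₀₀,M₁₀)=L(M₀₁,M₁₀)=1, L(M₀₁,M₁₁)=L(M₁₀,M₁₁)=2, L(M₀₀,M₁₁)=3, and L(M,M)=0. Then the unique probability distribution π on M whose prior risk is constant is π = (1/2, 0, 0, 1/2), assigning probability 1/2 to M₀₀ and M₁₁ and probability 0 to M₀₁ and M₁₀. -/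
open Finset

/-- For this symmetric loss on `{0,1}²`, the unique probability distribution with
constant prior risk puts mass `1/2` on each of `M₀₀` and `M₁₁` and mass `0` on
`M₀₁` and `M₁₀` (a risk equilibrium prior without full support). -/
theorem risk_equilibrium_prior_not_full_support
    (L : Bool × Bool → Bool × Bool → ℝ)
    (hdiag : ∀ m, L m m = 0)
    (hsymm : ∀ m m', L m m' = L m' m)
    (h1 : L (false, false) (false, true) = 1)
    (h2 : L (false, false) (true, false) = 1)
    (h3 : L (false, true) (true, false) = 1)
    (h4 : L (false, true) (true, true) = 2)
    (h5 : L (true, false) (true, true) = 2)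
    (h6 : L (false, false) (true, true) = 3) :
    ∀ π : Bool × Bool → ℝ,
      (∀ m, 0 ≤ π m) → (∑ m : Bool × Bool, π m = 1) →
      ((∀ mhat mhat' : Bool × Bool,
          (∑ m : Bool × Bool, L m mhat * π m) = (∑ m : Bool × Bool, L m mhat' * π m))
        ↔ (π (false, false) = 1/2 ∧ π (false, true) = 0 ∧
            π (true, false) = 0 ∧ π (true, true) = 1/2)) := by
  intro π hpos hsum
  have s1 := hsymm (false, false) (false, true)
  have s2 := hsymm (false, false) (true, false)
  have s3 := hsymm (false, true) (true, false)
  have s4 := hsymm (false, true) (true, true)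
  have s5 := hsymm (true, false) (true, true)
  have s6 := hsymm (false, false) (true, true)
  have d1 := hdiag (false, false)
  have d2 := hdiag (false, true)
  have d3 := hdiag (true, false)
  have d4 := hdiag (true, true)
  simp only [Fintype.sum_prod_type, Fintype.sum_bool] at hsum
  constructor
  · intro h
    have e1 := h (false, false) (false, true)
    have e2 := h (false, false) (true, false)
    have e3 := h (false, false) (true, true)
    simp only [Fintype.sum_prod_type, Fintype.sum_bool] at e1 e2 e3
    simp only [← s1, ← s2, ← s3, ← s4, ← s5, ← s6, d1, d2, d3, d4,
      h1, h2, h3, h4, h5, h6] at e1 e2 e3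
    refine ⟨by linarith, by linarith, by linarith, by linarith⟩
  · rintro ⟨ha, hb, hc, hd⟩
    intro mhat mhat'
    have key : ∀ x : Bool × Bool, (∑ m : Bool × Bool, L m x * π m) = 3/2 := by
      intro x
      simp only [Fintype.sum_prod_type, Fintype.sum_bool]
      rcases x with ⟨bx, by'⟩
      rcases bx <;> rcases by' <;>
        simp only [← s1, ← s2, ← s3, ← s4, ← s5, ← s6, d1, d2, d3, d4,
          h1, h2, h3, h4, h5, h6, ha, hb, hc, hd] <;> ring
    rw [key, key]
end
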